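/- arXiv:0909.5234 — 3 statements merged into one kernel-verified Lean document; each statement's English description precedes it below -/
import Mathlib

section
/- The series ∑_{n=1}^∞ (1 - 2^{-2n}) · ζ(2n) / (n·(2n+1)) converges to ln 2, where ζ is the Riemann zeta function. -/
/-!
Since `(1 - 2^{-2n}) ζ(2n) = ∑_{m ≥ 0} (2m+1)^{-2n}`, the series is a double series of nonnegative
terms, which may be summed over `n` first. For `x = 1/(2m+1)` the inner sum
`∑_{n ≥ 1} x^{2n} / (n(2n+1))` follows from the logarithm series via
`1/(n(2n+1)) = 1/n - 2/(2n+1)`, and equals `2 + 2 log(2m+1) + 2m log(2m) - (2m+2) log(2m+2)`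
(for `m = 0` it is an alternating harmonic series). These values telescope: their `N`-th partial sum
is `log 2 + 2 log (s(2N) / s(N))` with `s(n) = n! / (√(2n) (n/e)^n)` the Stirling sequence, and since
`s` has a positive limit the total is `log 2`.
-/

open Real Filter Topology Finset
open scoped Nat

open Complex in
lemma hasSum_one_div_two_mul_add_one_cpow {s : ℂ} (hs : 1 < s.re) :
    HasSum (fun m : ℕ => 1 / (2 * m + 1 : ℂ) ^ s) ((1 - 2 ^ (-s)) * riemannZeta s) := by
  have hsum := Complex.summable_one_div_nat_cpow.2 hs
  have hzeta : HasSum (fun k : ℕ => 1 / (k : ℂ) ^ s) (riemannZeta s) :=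
    zeta_eq_tsum_one_div_nat_cpow hs ▸ hsum.hasSum
  have heven : HasSum (fun m : ℕ => 1 / ((2 * m : ℕ) : ℂ) ^ s) (2 ^ (-s) * riemannZeta s) := by
    refine (hzeta.mul_left (2 ^ (-s))).congr_fun fun m => ?_
    rw [Nat.cast_mul, natCast_mul_natCast_cpow, Nat.cast_ofNat, cpow_neg]
    field_simp
  obtain ⟨t, hodd⟩ : Summable (fun m : ℕ => 1 / ((2 * m + 1 : ℕ) : ℂ) ^ s) :=
    hsum.comp_injective fun a b h => by simpa using h
  obtain rfl : t = (1 - 2 ^ (-s)) * riemannZeta s := by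
    linear_combination
      (HasSum.even_add_odd (f := fun k : ℕ => 1 / (k : ℂ) ^ s) heven hodd).unique hzeta
  simpa using hodd

lemma hasSum_tsum_swap_of_nonneg {β γ : Type*} {f : β → γ → ℝ} {g : β → ℝ} {a : ℝ}
    (hf : ∀ b c, 0 ≤ f b c) (hrow : ∀ b, HasSum (f b) (g b)) (hg : HasSum g a) :
    HasSum (fun c => ∑' b, f b c) a := by
  have hsum : Summable (Function.uncurry f) :=
    (summable_prod_of_nonneg fun p => hf p.1 p.2).2
      ⟨fun b => (hrow b).summable, hg.summable.congr fun b => ((hrow b).tsum_eq).symm⟩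
  have ha : HasSum (Function.uncurry f) a := by
    simpa [(hsum.hasSum.prod_fiberwise hrow).unique hg] using hsum.hasSum
  exact ((Equiv.prodComm γ β).hasSum_iff.2 ha).prod_fiberwise fun c =>
    (hsum.comp_injective (Equiv.prodComm γ β).injective).prod_factor c |>.hasSum

lemma hasSum_pow_two_mul_add_two_div {x : ℝ} (hx : |x| < 1) (hx0 : x ≠ 0) :
    HasSum (fun n : ℕ => x ^ (2 * n + 2) / ((n + 1) * (2 * n + 3)))
      (2 - log (1 - x ^ 2) - (log (1 + x) - log (1 - x)) / x) := by
  have hsq : HasSum (fun n : ℕ => (x ^ 2) ^ (n + 1) / (n + 1)) (-log (1 - x ^ 2)) :=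
    hasSum_pow_div_log_of_abs_lt_one (by rw [abs_pow]; nlinarith [abs_nonneg x])
  have hodd : HasSum (fun n : ℕ => 2 * (1 / (2 * ↑(n + 1) + 1)) * x ^ (2 * (n + 1) + 1))
      (log (1 + x) - log (1 - x) - 2 * x) := by
    simpa using (hasSum_nat_add_iff' 1).2 (hasSum_log_sub_log_of_abs_lt_one hx)
  have hsum := hsq.sub (hodd.div_const x)
  rw [show -log (1 - x ^ 2) - (log (1 + x) - log (1 - x) - 2 * x) / x
      = 2 - log (1 - x ^ 2) - (log (1 + x) - log (1 - x)) / x by field_simp; ring] at hsum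
  refine hsum.congr_fun fun n => ?_
  push_cast
  field_simp
  ring

lemma tendsto_harmonic_two_mul_sub_harmonic :
    Tendsto (fun N : ℕ => (harmonic (2 * N) : ℝ) - harmonic N) atTop (𝓝 (log 2)) := by
  have hγ := tendsto_harmonic_sub_log
  have h2 := (hγ.comp (tendsto_id.const_mul_atTop' two_pos)).sub hγ
  rw [sub_self] at h2
  rw [← add_zero (log 2)]
  refine (h2.const_add (log 2)).congr' ?_
  filter_upwards [eventually_ne_atTop 0] with N hN
  simp only [Function.comp_apply, id, Nat.cast_mul, Nat.cast_ofNat]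
  rw [log_mul two_ne_zero (by exact_mod_cast hN)]
  ring

lemma sum_range_one_div_mul_two_mul_add_three (N : ℕ) :
    ∑ n ∈ range N, (1 : ℝ) / ((n + 1) * (2 * n + 3)) =
      2 - 2 * ((harmonic (2 * (N + 1)) : ℝ) - harmonic (N + 1)) - 1 / (N + 1) := by
  induction N with
  | zero => norm_num [harmonic]
  | succ N ih =>
    rw [sum_range_succ, ih, show 2 * (N + 1 + 1) = 2 * (N + 1) + 1 + 1 by ring,
      harmonic_succ (2 * (N + 1) + 1), harmonic_succ (2 * (N + 1)), harmonic_succ (N + 1)]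
    push_cast
    field_simp
    ring

lemma hasSum_one_div_mul_two_mul_add_three :
    HasSum (fun n : ℕ => (1 : ℝ) / ((n + 1) * (2 * n + 3))) (2 - 2 * log 2) := by
  rw [hasSum_iff_tendsto_nat_of_nonneg fun n => by positivity]
  have h := ((tendsto_harmonic_two_mul_sub_harmonic.comp (tendsto_add_atTop_nat 1)).const_mul 2
    |>.const_sub 2).sub tendsto_one_div_add_atTop_nhds_zero_nat
  rw [sub_zero] at h
  exact h.congr fun N => (sum_range_one_div_mul_two_mul_add_three N).symm

lemma sum_range_log_two_mul_add_one (N : ℕ) :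
    ∑ m ∈ range N, log (2 * m + 1) = log (2 * N)! - log N ! - N * log 2 := by
  induction N with
  | zero => simp
  | succ N ih =>
    rw [sum_range_succ, ih, show 2 * (N + 1) = 2 * N + 1 + 1 by ring, Nat.factorial_succ,
      Nat.factorial_succ, Nat.factorial_succ]
    push_cast
    rw [log_mul (by positivity) (by positivity), log_mul (by positivity) (by positivity),
      log_mul (by positivity) (by positivity), show (2 * N + 1 + 1 : ℝ) = 2 * (N + 1) by ring,
      log_mul two_ne_zero (by positivity)]
    ring

namespace ZetaLogTwo

/-- For `m = 0` the middle term is `0 * log 0 = 0`, the correct value of `x log x` at `0`. -/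
noncomputable def rowSum (m : ℕ) : ℝ :=
  2 + 2 * log (2 * m + 1) + 2 * m * log (2 * m) - (2 * m + 2) * log (2 * m + 2)

lemma hasSum_rowSum (m : ℕ) :
    HasSum (fun n : ℕ => ((2 * m + 1 : ℝ)⁻¹) ^ (2 * n + 2) / ((n + 1) * (2 * n + 3)))
      (rowSum m) := by
  rcases Nat.eq_zero_or_pos m with rfl | hm
  · simpa [rowSum, sub_eq_add_neg] using hasSum_one_div_mul_two_mul_add_three
  set q : ℝ := 2 * m + 1 with hq
  have hq1 : 1 < q := by rw [hq]; norm_cast; omega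
  have hx : |q⁻¹| < 1 := by
    rw [abs_inv, abs_of_pos (by linarith)]
    exact inv_lt_one_of_one_lt₀ hq1
  convert hasSum_pow_two_mul_add_two_div hx (by positivity) using 1
  have hsq : 1 - q⁻¹ ^ 2 = (q - 1) * (q + 1) / q ^ 2 := by field_simp; ring
  have hadd : 1 + q⁻¹ = (q + 1) / q := by field_simp
  have hsub : 1 - q⁻¹ = (q - 1) / q := by field_simp
  rw [hsq, hadd, hsub, log_div (by positivity) (by positivity), log_mul (by linarith) (by linarith),
    log_div (by linarith) (by positivity), log_div (by linarith) (by positivity), log_pow,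
    rowSum, ← hq, show (2 * m + 2 : ℝ) = q + 1 by rw [hq]; ring,
    show (2 * m : ℝ) = q - 1 by rw [hq]; ring]
  push_cast
  field_simp
  ring

lemma sum_range_rowSum {N : ℕ} (hN : N ≠ 0) :
    ∑ m ∈ range N, rowSum m =
      log 2 + 2 * (log (Stirling.stirlingSeq (2 * N)) - log (Stirling.stirlingSeq N)) := by
  have htel (m : ℕ) : rowSum m = 2 + 2 * log (2 * m + 1) +
      (2 * (m : ℝ) * log (2 * m) - 2 * ((m + 1 : ℕ) : ℝ) * log (2 * ((m + 1 : ℕ) : ℝ))) := by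
    rw [rowSum]
    push_cast
    ring_nf
  have hN' : (N : ℝ) ≠ 0 := by exact_mod_cast hN
  simp only [htel, sum_add_distrib, sum_range_sub', ← mul_sum, sum_range_log_two_mul_add_one,
    Stirling.log_stirlingSeq_formula, sum_const, card_range, nsmul_eq_mul]
  rw [log_div (by positivity) (exp_ne_zero 1), log_div (by positivity) (exp_ne_zero 1), log_exp]
  push_cast
  rw [log_mul two_ne_zero (mul_ne_zero two_ne_zero hN'), log_mul two_ne_zero hN']
  ring

lemma hasSum_rowSum_log_two : HasSum rowSum (log 2) := by
  rw [hasSum_iff_tendsto_nat_of_nonneg fun m => (hasSum_rowSum m).nonneg fun n => by positivity]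
  have hlog := Stirling.tendsto_stirlingSeq_sqrt_pi.log (by positivity)
  have hdiff := ((hlog.comp (tendsto_id.const_mul_atTop' two_pos)).sub hlog).const_mul 2
  rw [sub_self, mul_zero] at hdiff
  rw [← add_zero (log 2)]
  refine (hdiff.const_add (log 2)).congr' ?_
  filter_upwards [eventually_ne_atTop 0] with N hN
  exact (sum_range_rowSum hN).symm

end ZetaLogTwo

open Complex ZetaLogTwo

/-- The series `∑_{n=1}^∞ (1 - 2^{-2n}) ζ(2n) / (n (2n+1))` converges to `ln 2`. -/
theorem dancs_he_zeta_series_log_two :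
    HasSum (fun n : ℕ =>
      (1 - (2 : ℂ) ^ (-(2 * ((n : ℤ) + 1)))) * riemannZeta ((2 * (n + 1) : ℕ) : ℂ) /
        (((n : ℂ) + 1) * (2 * ((n : ℂ) + 1) + 1)))
      ((Real.log 2 : ℝ) : ℂ) := by
  have hcol (n : ℕ) : HasSum
      (fun m : ℕ => ((((2 * m + 1 : ℝ)⁻¹) ^ (2 * n + 2) / ((n + 1) * (2 * n + 3)) : ℝ) : ℂ))
      ((1 - (2 : ℂ) ^ (-(2 * ((n : ℤ) + 1)))) * riemannZeta ((2 * (n + 1) : ℕ) : ℂ) /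
        (((n : ℂ) + 1) * (2 * ((n : ℂ) + 1) + 1))) := by
    have hs : 1 < (((2 * (n + 1) : ℕ) : ℂ)).re := by rw [natCast_re]; norm_cast; omega
    have h := (hasSum_one_div_two_mul_add_one_cpow hs).div_const
      (((n : ℂ) + 1) * (2 * ((n : ℂ) + 1) + 1))
    rw [cpow_neg, cpow_natCast] at h
    rw [show -(2 * ((n : ℤ) + 1)) = -((2 * (n + 1) : ℕ) : ℤ) by push_cast; ring, zpow_neg,
      zpow_natCast]
    refine h.congr_fun fun m => ?_
    rw [cpow_natCast, one_div, ← inv_pow]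
    push_cast
    ring
  have hswap := hasSum_tsum_swap_of_nonneg (fun m n => by positivity) hasSum_rowSum
    hasSum_rowSum_log_two
  refine (hasSum_ofReal.2 hswap).congr_fun fun n => ?_
  rw [ofReal_tsum, (hcol n).tsum_eq]
end

section
/- The Dancs–He series for ln 2: (π²/2) · ∑_{m=0}^∞ (−1)^m · π^{2m} · E_{2m+1}(1) / (2m+3)! = ln 2, where E_n denotes the n-th Euler polynomial. -/
open Real Nat

/-- The `n`-th Euler polynomial, defined (equivalently to the generating-function
definition `2 e^{xt}/(e^t+1) = ∑ E_n(x) t^n / n!`) via Bernoulli polynomials by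
`E_n(x) = (2/(n+1)) (B_{n+1}(x) - 2^{n+1} B_{n+1}(x/2))`. -/
noncomputable def eulerPoly (n : ℕ) : Polynomial ℚ :=
  (2 / (n + 1 : ℚ)) • (Polynomial.bernoulli (n + 1) -
    (2 ^ (n + 1) : ℚ) • ((Polynomial.bernoulli (n + 1)).comp
      (Polynomial.C (1 / 2) * Polynomial.X)))

open Filter Topology

/-!
With `λ(s) = ∑_{j ≥ 0} (2j+1)^{-s}`, the Fourier expansion of the Bernoulli polynomials gives
`λ(2m+2) = (-1)^m π^{2m+2} E_{2m+1}(1) / (4 (2m+1)!)`, so the `m`-th term of the series is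
`w_m λ(2m+2)` with `w_m = 1/((m+1)(2m+3))`. All terms of the double series `w_m (2j+1)^{-2m-2}` are
nonnegative, so the sums may be exchanged: the series equals `∑_j W(1/(2j+1))`, where
`W(x) = ∑_m w_m x^{2m+2}` is summed in closed form by the logarithmic series (and Abel's
theorem at `x = 1`). The partial sums of `∑_j W(1/(2j+1))` telescope to an expression in
`log (2K)!` and `log K!` whose limit is `log 2` by Stirling's formula.
-/

theorem HasSum.fiberwise_swap_of_nonneg {β γ : Type*} {g : γ → ℝ} {s : ℝ} (hs : HasSum g s)
    {f : β × γ → ℝ} (hf : 0 ≤ f) (hg : ∀ c, HasSum (fun b => f (b, c)) (g c))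
    {h : β → ℝ} (hh : ∀ b, HasSum (fun c => f (b, c)) (h b)) : HasSum h s := by
  have hswap : Summable (f ∘ Prod.swap) :=
    (summable_prod_of_nonneg fun p => hf p.swap).mpr ⟨fun c => (hg c).summable, by
      simpa only [Function.comp_apply, Prod.swap_prod_mk, (hg _).tsum_eq] using hs.summable⟩
  have hsum : s = ∑' p, f p := by
    rw [hs.unique (hswap.hasSum.prod_fiberwise hg)]
    exact (Equiv.prodComm γ β).tsum_eq f
  rw [hsum]
  exact hswap.prod_symm.hasSum.prod_fiberwise hh

lemma Polynomial.eval_ratCast_map_algebraMap (p : Polynomial ℚ) (x : ℚ) :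
    (p.map (algebraMap ℚ ℝ)).eval (x : ℝ) = ((p.eval x : ℚ) : ℝ) :=
  eval_map_apply (algebraMap ℚ ℝ) x

theorem hasSum_one_div_odd_pow_bernoulli {k : ℕ} (hk : k ≠ 0) :
    HasSum (fun j : ℕ => 1 / (2 * (j : ℝ) + 1) ^ (2 * k))
      ((-1) ^ (k + 1) * (2 * π) ^ (2 * k) / 2 / (2 * k)! *
        (((Polynomial.bernoulli (2 * k)).eval 1 / 4 ^ k
          - (Polynomial.bernoulli (2 * k)).eval (1 / 2) : ℚ) : ℝ)) := by
  set c : ℝ := (-1) ^ (k + 1) * (2 * π) ^ (2 * k) / 2 / (2 * k)!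
  set B₁ : ℝ := (((Polynomial.bernoulli (2 * k)).eval 1 : ℚ) : ℝ)
  set Bhalf : ℝ := (((Polynomial.bernoulli (2 * k)).eval (1 / 2) : ℚ) : ℝ)
  set f : ℕ → ℝ := fun n => (-1) ^ n / (n : ℝ) ^ (2 * k)
  have hζ : HasSum (fun n : ℕ => 1 / (n : ℝ) ^ (2 * k)) (c * B₁) := by
    have := hasSum_one_div_nat_pow_mul_cos hk (x := 1) ⟨zero_le_one, le_rfl⟩
    rw [← Rat.cast_one, Polynomial.eval_ratCast_map_algebraMap] at this
    convert this using 2 with n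
    · rw [Rat.cast_one, mul_one, mul_comm (2 * π), cos_nat_mul_two_pi, mul_one]
    · simp [c]
  have hη : HasSum f (c * Bhalf) := by
    have := hasSum_one_div_nat_pow_mul_cos hk (x := 1 / 2) ⟨by norm_num, by norm_num⟩
    rw [show (1 / 2 : ℝ) = ((1 / 2 : ℚ) : ℝ) by norm_num,
      Polynomial.eval_ratCast_map_algebraMap] at this
    convert this using 2 with n
    rw [show 2 * π * n * ((1 / 2 : ℚ) : ℝ) = n * π by push_cast; ring, cos_nat_mul_pi]
    ring
  -- The even terms of `f` sum to `ζ(2k) / 4 ^ k`, and the odd ones to `-λ(2k)`.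
  have heven : HasSum (fun j => f (2 * j)) (c * B₁ / 4 ^ k) := by
    refine (hζ.div_const (4 ^ k)).congr_fun fun j => ?_
    simp only [f, pow_mul, neg_one_sq, one_pow]
    push_cast
    rw [mul_pow, mul_pow]
    norm_num
    ring
  obtain ⟨o, hodd⟩ : Summable (fun j => f (2 * j + 1)) :=
    hη.summable.comp_injective fun a b h => by simpa using h
  have ho : o = c * Bhalf - c * B₁ / 4 ^ k := by
    linarith [(heven.even_add_odd hodd).unique hη]
  rw [show c * (((Polynomial.bernoulli (2 * k)).eval 1 / 4 ^ k
      - (Polynomial.bernoulli (2 * k)).eval (1 / 2) : ℚ) : ℝ) = -o by rw [ho]; push_cast; ring]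
  refine hodd.neg.congr_fun fun j => ?_
  simp only [f, pow_succ, pow_mul]
  push_cast
  ring

lemma eulerPoly_eval_one_odd (m : ℕ) :
    (eulerPoly (2 * m + 1)).eval 1 = ((Polynomial.bernoulli (2 * (m + 1))).eval 1
      - 4 ^ (m + 1) * (Polynomial.bernoulli (2 * (m + 1))).eval (1 / 2)) / (m + 1) := by
  simp only [eulerPoly, Polynomial.eval_smul, Polynomial.eval_sub, Polynomial.eval_comp,
    Polynomial.eval_mul, Polynomial.eval_C, Polynomial.eval_X, smul_eq_mul, mul_one]
  rw [show 2 * m + 1 + 1 = 2 * (m + 1) by ring, pow_mul]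
  push_cast
  field_simp
  ring

theorem hasSum_one_div_odd_pow_eulerPoly (m : ℕ) :
    HasSum (fun j : ℕ => 1 / (2 * (j : ℝ) + 1) ^ (2 * (m + 1)))
      ((-1) ^ m * π ^ (2 * (m + 1)) * (((eulerPoly (2 * m + 1)).eval 1 : ℚ) : ℝ) /
        (4 * (2 * m + 1)!)) := by
  convert hasSum_one_div_odd_pow_bernoulli (k := m + 1) (by omega) using 1
  have hfact : ((2 * (m + 1))! : ℝ) = (2 * m + 2) * (2 * m + 1)! := by
    rw [show 2 * (m + 1) = 2 * m + 1 + 1 by ring, factorial_succ]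
    push_cast
    ring
  rw [eulerPoly_eval_one_odd, hfact, mul_pow, pow_mul 2, pow_succ (-1 : ℝ) (m + 1)]
  generalize (Polynomial.bernoulli (2 * (m + 1))).eval 1 = B₁
  generalize (Polynomial.bernoulli (2 * (m + 1))).eval (1 / 2) = Bhalf
  push_cast
  field_simp
  ring

noncomputable def dancsHeWeight (m : ℕ) : ℝ := 1 / ((m + 1) * (2 * m + 3))

/-- `∑ₘ w_m x^{2m+2}` in closed form; at `x = 1` the junk value `log 0 = 0` kills the last term,
which is also its limit, so `dancsHeGenFun 1` is the Abel sum of the weights. -/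
noncomputable def dancsHeGenFun (x : ℝ) : ℝ :=
  2 - (1 + x⁻¹) * Real.log (1 + x) + (x⁻¹ - 1) * Real.log (1 - x)

lemma dancsHeWeight_nonneg (m : ℕ) : 0 ≤ dancsHeWeight m := by
  unfold dancsHeWeight; positivity

theorem hasSum_dancsHeWeight_mul_pow {x : ℝ} (hx0 : x ≠ 0) (hx1 : |x| < 1) :
    HasSum (fun m => dancsHeWeight m * x ^ (2 * (m + 1))) (dancsHeGenFun x) := by
  obtain ⟨hx_gt, hx_lt⟩ := abs_lt.mp hx1
  have hsq : |x ^ 2| < 1 := by rw [abs_pow]; exact pow_lt_one₀ (abs_nonneg x) hx1 two_ne_zero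
  have hlog := hasSum_pow_div_log_of_abs_lt_one hsq
  have hartanh := (hasSum_nat_add_iff' 1).mpr (hasSum_log_sub_log_of_abs_lt_one hx1)
  have hval : dancsHeGenFun x =
      -Real.log (1 - x ^ 2) - x⁻¹ * (Real.log (1 + x) - Real.log (1 - x) -
        ∑ k ∈ Finset.range 1, 2 * (1 / (2 * (k : ℝ) + 1)) * x ^ (2 * k + 1)) := by
    rw [show 1 - x ^ 2 = (1 - x) * (1 + x) by ring, log_mul (by linarith) (by linarith)]
    simp only [dancsHeGenFun, Finset.sum_range_one]
    field_simp
    ring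
  rw [hval]
  refine (hlog.sub (hartanh.mul_left x⁻¹)).congr_fun fun m => ?_
  simp only [dancsHeWeight]
  push_cast
  field_simp
  ring

theorem summable_dancsHeWeight : Summable dancsHeWeight := by
  refine .of_nonneg_of_le dancsHeWeight_nonneg (fun m => ?_)
    ((summable_nat_add_iff 1).mpr (Real.summable_one_div_nat_pow.mpr one_lt_two))
  simp only [dancsHeWeight]
  push_cast
  gcongr
  nlinarith

theorem continuousAt_dancsHeGenFun_one : ContinuousAt dancsHeGenFun 1 := by
  have hform : dancsHeGenFun = fun x =>
      2 - (1 + x⁻¹) * Real.log (1 + x) + x⁻¹ * ((1 - x) * Real.log (1 - x)) := by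
    ext x
    rcases eq_or_ne x 0 with rfl | hx
    · simp [dancsHeGenFun]
    · simp only [dancsHeGenFun, ← mul_assoc, mul_sub, inv_mul_cancel₀ hx, mul_one]
  have hmul_log : ContinuousAt (fun x : ℝ => (1 - x) * Real.log (1 - x)) 1 :=
    (continuous_mul_log.comp (continuous_sub_left 1)).continuousAt
  have hlog : ContinuousAt (fun x : ℝ => Real.log (1 + x)) 1 :=
    (continuousAt_const.add continuousAt_id).log (by norm_num)
  rw [hform]
  fun_prop (disch := norm_num)

theorem hasSum_dancsHeWeight : HasSum dancsHeWeight (dancsHeGenFun 1) := by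
  have habel := Real.tendsto_tsum_powerSeries_nhdsWithin_lt
    summable_dancsHeWeight.hasSum.tendsto_sum_nat
  have hsq : Tendsto (fun x : ℝ => x ^ 2) (𝓝[<] 1) (𝓝[<] 1) := by
    refine tendsto_nhdsWithin_iff.mpr ⟨?_, ?_⟩
    · simpa using ((continuous_pow 2).tendsto (1 : ℝ)).mono_left nhdsWithin_le_nhds
    · filter_upwards [Ioo_mem_nhdsLT zero_lt_one] with x hx
      exact pow_lt_one₀ hx.1.le hx.2 two_ne_zero
  have hclosed :
      Tendsto (fun x => dancsHeGenFun x / x ^ 2) (𝓝[<] 1) (𝓝 (dancsHeGenFun 1)) := by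
    have h := continuousAt_dancsHeGenFun_one.tendsto.div ((continuous_pow 2).tendsto 1)
      (by norm_num)
    rw [one_pow, div_one] at h
    exact h.mono_left nhdsWithin_le_nhds
  have heq : (fun x : ℝ => ∑' m, dancsHeWeight m * (x ^ 2) ^ m) =ᶠ[𝓝[<] 1]
      fun x => dancsHeGenFun x / x ^ 2 := by
    filter_upwards [Ioo_mem_nhdsLT zero_lt_one] with x hx
    have hx0 : x ≠ 0 := hx.1.ne'
    refine (((hasSum_dancsHeWeight_mul_pow hx0 ?_).div_const (x ^ 2)).congr_fun fun m => ?_).tsum_eq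
    · rw [abs_of_pos hx.1]; exact hx.2
    · field_simp
      ring
  rw [← tendsto_nhds_unique ((habel.comp hsq).congr' heq) hclosed]
  exact summable_dancsHeWeight.hasSum

theorem hasSum_dancsHeWeight_div_pow {n : ℝ} (hn : 1 ≤ n) :
    HasSum (fun m => dancsHeWeight m / n ^ (2 * (m + 1))) (dancsHeGenFun n⁻¹) := by
  rcases hn.eq_or_lt with rfl | hn
  · simpa using hasSum_dancsHeWeight
  · have hx : |n⁻¹| < 1 := by
      rw [abs_of_pos (by positivity)]
      exact inv_lt_one_of_one_lt₀ hn
    simpa [div_eq_mul_inv] using hasSum_dancsHeWeight_mul_pow (by positivity) hx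

theorem dancsHeGenFun_inv {n : ℝ} (hn : 1 ≤ n) :
    dancsHeGenFun n⁻¹ = 2 + 2 * Real.log n - (n + 1) * Real.log (n + 1)
      + (n - 1) * Real.log (n - 1) := by
  have hn0 : n ≠ 0 := by positivity
  have hlog_add : Real.log (1 + n⁻¹) = Real.log (n + 1) - Real.log n := by
    rw [← log_div (by positivity) hn0, add_div, div_self hn0, one_div]
  have hmul_log_sub :
      (n - 1) * Real.log (1 - n⁻¹) = (n - 1) * (Real.log (n - 1) - Real.log n) := by
    rcases hn.eq_or_lt with rfl | hn
    · simp
    · rw [← log_div (by linarith) hn0, sub_div, div_self hn0, one_div]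
  simp only [dancsHeGenFun, inv_inv, hlog_add, add_comm 1 n, hmul_log_sub]
  ring

theorem sum_range_dancsHeGenFun_inv_odd (K : ℕ) :
    ∑ j ∈ Finset.range K, dancsHeGenFun (2 * j + 1 : ℝ)⁻¹ =
      2 * K + 2 * Real.log (2 * K)! - 2 * K * Real.log 2 - 2 * Real.log K !
        - 2 * K * Real.log (2 * K) := by
  induction K with
  | zero => simp
  | succ K ih =>
    have hfact₂ : ((2 * (K + 1))! : ℝ) = (2 * (K + 1)) * (2 * K + 1) * (2 * K)! := by
      rw [show 2 * (K + 1) = 2 * K + 1 + 1 by ring, factorial_succ, factorial_succ]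
      push_cast
      ring
    have hfact : ((K + 1)! : ℝ) = (K + 1) * K ! := by
      rw [factorial_succ]
      push_cast
      ring
    have hK : (0 : ℝ) < K + 1 := by positivity
    have hlog₂ : Real.log (2 * K + 1 + 1) = Real.log 2 + Real.log (K + 1) := by
      rw [← log_mul two_ne_zero hK.ne']
      ring_nf
    rw [Finset.sum_range_succ, ih, dancsHeGenFun_inv (by linarith), hfact₂, hfact, hlog₂,
      show (2 * K + 1 - 1 : ℝ) = 2 * K by ring]
    push_cast
    have h2K : (0 : ℝ) < 2 * K + 1 := by positivity
    rw [log_mul (by positivity) (by positivity : ((2 * K)! : ℝ) ≠ 0),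
      log_mul (by positivity) h2K.ne', log_mul two_ne_zero hK.ne',
      log_mul hK.ne' (by positivity : (K ! : ℝ) ≠ 0)]
    ring

theorem sum_range_dancsHeGenFun_inv_odd_eq_stirlingSeq {K : ℕ} (hK : K ≠ 0) :
    ∑ j ∈ Finset.range K, dancsHeGenFun (2 * j + 1 : ℝ)⁻¹ =
      Real.log 2 +
        2 * (Real.log (Stirling.stirlingSeq (2 * K)) - Real.log (Stirling.stirlingSeq K)) := by
  have hK0 : (K : ℝ) ≠ 0 := cast_ne_zero.mpr hK
  have hlog_div_exp (n : ℕ) (hn : n ≠ 0) : Real.log (n / rexp 1) = Real.log n - 1 := by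
    rw [log_div (cast_ne_zero.mpr hn) (exp_ne_zero 1), log_exp]
  rw [sum_range_dancsHeGenFun_inv_odd, Stirling.log_stirlingSeq_formula,
    Stirling.log_stirlingSeq_formula, hlog_div_exp K hK, hlog_div_exp (2 * K) (by omega)]
  push_cast
  rw [log_mul two_ne_zero (mul_ne_zero two_ne_zero hK0), log_mul two_ne_zero hK0]
  ring

theorem tendsto_sum_range_dancsHeGenFun_inv_odd :
    Tendsto (fun K => ∑ j ∈ Finset.range K, dancsHeGenFun (2 * j + 1 : ℝ)⁻¹) atTop
      (𝓝 (Real.log 2)) := by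
  have hlog : Tendsto (fun K => Real.log (Stirling.stirlingSeq K)) atTop (𝓝 (Real.log √π)) :=
    (continuousAt_log (by positivity)).tendsto.comp Stirling.tendsto_stirlingSeq_sqrt_pi
  have hlog₂ := hlog.comp (tendsto_id.const_mul_atTop' two_pos)
  have := ((hlog₂.sub hlog).const_mul 2).const_add (Real.log 2)
  rw [sub_self, mul_zero, add_zero] at this
  refine this.congr' ?_
  filter_upwards [eventually_ne_atTop 0] with K hK
  exact (sum_range_dancsHeGenFun_inv_odd_eq_stirlingSeq hK).symm

theorem hasSum_dancsHeGenFun_inv_odd :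
    HasSum (fun j : ℕ => dancsHeGenFun (2 * j + 1 : ℝ)⁻¹) (Real.log 2) := by
  have hnonneg (j : ℕ) : 0 ≤ dancsHeGenFun (2 * j + 1 : ℝ)⁻¹ :=
    (hasSum_dancsHeWeight_div_pow (by linarith [(j.cast_nonneg : (0 : ℝ) ≤ j)])).nonneg
      fun m => div_nonneg (dancsHeWeight_nonneg m) (by positivity)
  exact (hasSum_iff_tendsto_nat_of_nonneg hnonneg _).mpr tendsto_sum_range_dancsHeGenFun_inv_odd

theorem hasSum_dancsHeWeight_div_odd_pow (m : ℕ) :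
    HasSum (fun j : ℕ => dancsHeWeight m / (2 * (j : ℝ) + 1) ^ (2 * (m + 1)))
      ((π ^ 2 / 2) * ((-1 : ℝ) ^ m * π ^ (2 * m) *
        (((eulerPoly (2 * m + 1)).eval 1 : ℚ) : ℝ) / ((2 * m + 3)! : ℝ))) := by
  have hfact : ((2 * m + 3)! : ℝ) = (2 * m + 3) * (2 * m + 2) * (2 * m + 1)! := by
    rw [factorial_succ, factorial_succ]
    push_cast
    ring
  have hterm : (π ^ 2 / 2) * ((-1 : ℝ) ^ m * π ^ (2 * m) *
      (((eulerPoly (2 * m + 1)).eval 1 : ℚ) : ℝ) / ((2 * m + 3)! : ℝ)) =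
      dancsHeWeight m * ((-1) ^ m * π ^ (2 * (m + 1)) *
        (((eulerPoly (2 * m + 1)).eval 1 : ℚ) : ℝ) / (4 * (2 * m + 1)!)) := by
    rw [hfact, dancsHeWeight, show 2 * (m + 1) = 2 * m + 2 by ring, pow_add]
    field_simp
    ring
  rw [hterm]
  exact ((hasSum_one_div_odd_pow_eulerPoly m).mul_left _).congr_fun fun j => (mul_one_div _ _).symm

/-- Dancs–He series for `ln 2`:
`(π²/2) ∑_{m=0}^∞ (-1)^m π^{2m} E_{2m+1}(1) / (2m+3)! = ln 2`. -/
theorem dancs_he_series_log_two :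
    HasSum (fun m : ℕ =>
      (π ^ 2 / 2) * ((-1 : ℝ) ^ m * π ^ (2 * m) *
        (((eulerPoly (2 * m + 1)).eval 1 : ℚ) : ℝ) / ((2 * m + 3)! : ℝ)))
      (Real.log 2) := by
  have hfiber (j : ℕ) : HasSum (fun m => dancsHeWeight m / (2 * (j : ℝ) + 1) ^ (2 * (m + 1)))
      (dancsHeGenFun (2 * j + 1 : ℝ)⁻¹) :=
    hasSum_dancsHeWeight_div_pow (by linarith [(j.cast_nonneg : (0 : ℝ) ≤ j)])
  exact hasSum_dancsHeGenFun_inv_odd.fiberwise_swap_of_nonneg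
    (f := fun p : ℕ × ℕ => dancsHeWeight p.1 / (2 * (p.2 : ℝ) + 1) ^ (2 * (p.1 + 1)))
    (fun p => div_nonneg (dancsHeWeight_nonneg p.1) (by positivity))
    hfiber hasSum_dancsHeWeight_div_odd_pow
end

section
/- For every positive integer m, the infinite series ∑_{k=0}^∞ (−1)^k · π^{2k} · E_{2k+1}(1)/(2k+2m+3)! satisfies π² · ∑_{k=0}^∞ (−1)^k · π^{2k} · E_{2k+1}(1)/(2k+2m+3)! = 4 · ∑_{n=1}^∞ (1 − 2^{−2n}) · (2n−1)!/(2n+2m+1)! · ζ(2n). -/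
open Real Nat Complex

/-!
Both series are the same series term by term up to the factor `4 / π²`: for `n = k + 1`,
`E_{2k+1}(1) = 2 (2^{2n} - 1) B_{2n} / (2n)` (from `B_n(1/2) = (2^{1-n} - 1) B_n`) and
`ζ(2n) = (-1)^{n+1} 2^{2n-1} π^{2n} B_{2n} / (2n)!`. The zeta series converges absolutely
because `ζ(2n) ≤ ζ(2)` and `(2n-1)! / (2n+2m+1)! ≤ 1 / n²`.
-/

namespace PowerSeries

-- `B(t) = t / (e^t - 1)` and `e^{2t} - 1 = (e^t - 1)(e^t + 1)` give `B(2t) (e^t + 1) = 2 B(t)`.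
theorem rescale_two_bernoulliPowerSeries_mul_exp_add_one :
    rescale (2 : ℚ) (bernoulliPowerSeries ℚ) * (exp ℚ + 1) = 2 * bernoulliPowerSeries ℚ := by
  have hexp : exp ℚ - 1 ≠ 0 := fun h => by
    simpa [coeff_exp] using congrArg (coeff (R := ℚ) 1) h
  have hrescale : rescale (2 : ℚ) (bernoulliPowerSeries ℚ) * (exp ℚ * exp ℚ - 1)
      = rescale 2 X := by
    have hsq : exp ℚ * exp ℚ = rescale (2 : ℚ) (exp ℚ) := by
      simpa [one_add_one_eq_two] using exp_mul_exp_eq_exp_add (1 : ℚ) 1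
    rw [hsq, ← map_one (rescale (2 : ℚ)), ← map_sub, ← map_mul,
      bernoulliPowerSeries_mul_exp_sub_one]
  apply mul_right_cancel₀ hexp
  calc rescale (2 : ℚ) (bernoulliPowerSeries ℚ) * (exp ℚ + 1) * (exp ℚ - 1)
      = rescale (2 : ℚ) (bernoulliPowerSeries ℚ) * (exp ℚ * exp ℚ - 1) := by ring
    _ = 2 * (bernoulliPowerSeries ℚ * (exp ℚ - 1)) := by
      rw [hrescale, rescale_X, bernoulliPowerSeries_mul_exp_sub_one, ← map_ofNat C 2]
    _ = 2 * bernoulliPowerSeries ℚ * (exp ℚ - 1) := by ring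

end PowerSeries

open PowerSeries in
theorem sum_range_choose_mul_two_pow_mul_bernoulli (n : ℕ) :
    ∑ i ∈ Finset.range (n + 1), (n.choose i : ℚ) * 2 ^ i * bernoulli i
      = (2 - 2 ^ n) * bernoulli n := by
  have h := congrArg (coeff (R := ℚ) n) rescale_two_bernoulliPowerSeries_mul_exp_add_one
  rw [← map_ofNat (C (R := ℚ)) 2, coeff_C_mul, mul_add, map_add, coeff_mul] at h
  simp only [bernoulliPowerSeries, coeff_rescale, coeff_mk, coeff_exp,
    Algebra.algebraMap_self, RingHom.id_apply] at h
  rw [Finset.Nat.sum_antidiagonal_eq_sum_range_succ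
    (fun p q => 2 ^ p * (bernoulli p / p !) * ((1 : ℚ) / q !))] at h
  have hterm : ∀ i ∈ Finset.range (n + 1),
      2 ^ i * (bernoulli i / i !) * ((1 : ℚ) / (n - i)!)
        = (n.choose i : ℚ) * 2 ^ i * bernoulli i / n ! := by
    intro i hi
    rw [Nat.cast_choose ℚ (Nat.lt_succ_iff.mp (Finset.mem_range.mp hi))]
    field_simp
  rw [Finset.sum_congr rfl hterm, ← Finset.sum_div] at h
  have h2 : (∑ i ∈ Finset.range (n + 1), (n.choose i : ℚ) * 2 ^ i * bernoulli i) / n !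
      + 2 ^ n * (bernoulli n / n !) = 2 * (bernoulli n / n !) := by
    simpa using h
  field_simp at h2
  linarith

theorem Polynomial.bernoulli_eval_one_half (n : ℕ) :
    (bernoulli n).eval (1 / 2 : ℚ) = (2 - 2 ^ n) / 2 ^ n * _root_.bernoulli n := by
  rw [bernoulli, eval_finsetSum, div_mul_eq_mul_div, eq_div_iff (by positivity),
    Finset.sum_mul, ← sum_range_choose_mul_two_pow_mul_bernoulli n]
  refine Finset.sum_congr rfl fun i hi => ?_
  have hin : i ≤ n := Nat.lt_succ_iff.mp (Finset.mem_range.mp hi)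
  rw [eval_monomial, ← Nat.sub_add_cancel hin, pow_add, Nat.sub_add_cancel hin, one_div, inv_pow]
  field_simp

theorem eulerPoly_two_mul_add_one_eval_one (k : ℕ) :
    (eulerPoly (2 * k + 1)).eval 1
      = 2 * (2 ^ (2 * k + 2) - 1) * bernoulli (2 * k + 2) / (2 * k + 2) := by
  have hB1 : (Polynomial.bernoulli (2 * k + 2)).eval (1 : ℚ) = bernoulli (2 * k + 2) := by
    rw [Polynomial.bernoulli_eval_one, ← bernoulli_eq_bernoulli'_of_ne_one (by omega)]
  simp only [eulerPoly, Polynomial.eval_smul, smul_eq_mul, Polynomial.eval_sub,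
    Polynomial.eval_comp, Polynomial.eval_mul, Polynomial.eval_C, Polynomial.eval_X, mul_one,
    show 2 * k + 1 + 1 = 2 * k + 2 from rfl, hB1, Polynomial.bernoulli_eval_one_half]
  push_cast
  rw [show (2 * k + 1 + 1 : ℚ) = 2 * k + 2 by ring]
  field_simp
  ring

theorem norm_riemannZeta_natCast_le {k : ℕ} (hk : 2 ≤ k) : ‖riemannZeta k‖ ≤ π ^ 2 / 6 := by
  have hsum : Summable (fun n : ℕ => 1 / (n : ℝ) ^ k) := Real.summable_one_div_nat_pow.mpr hk
  have hreal : riemannZeta k = ((∑' n : ℕ, 1 / (n : ℝ) ^ k : ℝ) : ℂ) := by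
    rw [zeta_nat_eq_tsum_of_gt_one hk, Complex.ofReal_tsum]
    norm_num
  rw [hreal, Complex.norm_real, Real.norm_of_nonneg (tsum_nonneg fun n => by positivity),
    ← hasSum_zeta_two.tsum_eq]
  refine hsum.tsum_le_tsum (fun n => ?_) (Real.summable_one_div_nat_pow.mpr one_lt_two)
  rcases Nat.eq_zero_or_pos n with rfl | hn
  · simp [show k ≠ 0 by omega]
  · gcongr
    exact_mod_cast hn

noncomputable def eulerSeriesTerm (m k : ℕ) : ℝ :=
  (-1) ^ k * π ^ (2 * k) * (((eulerPoly (2 * k + 1)).eval 1 : ℚ) : ℝ) / ((2 * k + 2 * m + 3)! : ℝ)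

noncomputable def zetaSeriesTerm (m n : ℕ) : ℂ :=
  (1 - (2 : ℂ) ^ (-(2 * ((n : ℤ) + 1)))) *
    (((2 * (n + 1) - 1)! : ℕ) : ℂ) / (((2 * (n + 1) + 2 * m + 1)! : ℕ) : ℂ) *
    riemannZeta ((2 * (n + 1) : ℕ) : ℂ)

theorem factorial_mul_succ_sq_le (m n : ℕ) : (2 * n + 1)! * (n + 1) ^ 2 ≤ (2 * n + 2 * m + 3)! :=
  calc (2 * n + 1)! * (n + 1) ^ 2 ≤ (2 * n + 1)! * ((2 * n + 2) * (2 * n + 3)) := by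
        gcongr; nlinarith
    _ = (2 * n + 3)! := by simp only [Nat.factorial_succ]; ring
    _ ≤ (2 * n + 2 * m + 3)! := Nat.factorial_le (by omega)

theorem norm_zetaSeriesTerm_le (m n : ℕ) : ‖zetaSeriesTerm m n‖ ≤ π ^ 2 / 6 / (n + 1) ^ 2 := by
  have hpow : ‖1 - (2 : ℂ) ^ (-(2 * ((n : ℤ) + 1)))‖ ≤ 1 := by
    have h0 : 0 ≤ (2 : ℝ) ^ (-(2 * ((n : ℤ) + 1))) := by positivity
    have h1 : (2 : ℝ) ^ (-(2 * ((n : ℤ) + 1))) ≤ 1 := zpow_le_one_of_nonpos₀ one_le_two (by omega)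
    rw [← Complex.ofReal_ofNat, ← Complex.ofReal_zpow, ← Complex.ofReal_one, ← Complex.ofReal_sub,
      Complex.norm_real, Real.norm_of_nonneg (by linarith)]
    linarith
  have hfact : ((2 * (n + 1) - 1)! : ℝ) / (2 * (n + 1) + 2 * m + 1)! ≤ 1 / (n + 1) ^ 2 := by
    rw [div_le_div_iff₀ (by positivity) (by positivity), one_mul,
      show 2 * (n + 1) - 1 = 2 * n + 1 by omega,
      show 2 * (n + 1) + 2 * m + 1 = 2 * n + 2 * m + 3 by omega]
    exact_mod_cast factorial_mul_succ_sq_le m n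
  have hzeta := norm_riemannZeta_natCast_le (k := 2 * (n + 1)) (by omega)
  rw [zetaSeriesTerm, norm_mul, norm_div, norm_mul, mul_div_assoc, Complex.norm_natCast,
    Complex.norm_natCast]
  calc _ ≤ 1 * (1 / ((n : ℝ) + 1) ^ 2) * (π ^ 2 / 6) := by gcongr
    _ = π ^ 2 / 6 / (n + 1) ^ 2 := by ring

theorem summable_zetaSeriesTerm (m : ℕ) : Summable (zetaSeriesTerm m) := by
  refine Summable.of_norm_bounded ?_ (norm_zetaSeriesTerm_le m)
  have h : Summable (fun n : ℕ => 1 / ((n + 1 : ℕ) : ℝ) ^ 2) :=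
    (summable_nat_add_iff 1).mpr (Real.summable_one_div_nat_pow.mpr one_lt_two)
  simpa [div_eq_mul_one_div (π ^ 2 / 6)] using h.mul_left (π ^ 2 / 6)

theorem eulerSeriesTerm_eq (m k : ℕ) :
    (eulerSeriesTerm m k : ℂ) = 4 / π ^ 2 * zetaSeriesTerm m k := by
  have hzeta : riemannZeta ((2 * k + 2 : ℕ) : ℂ) = (-1) ^ k * 2 ^ (2 * k + 1) * π ^ (2 * k + 2)
      * bernoulli (2 * k + 2) / (2 * k + 2)! := by
    rw [show ((2 * k + 2 : ℕ) : ℂ) = 2 * ((k + 1 : ℕ) : ℂ) by push_cast; ring,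
      riemannZeta_two_mul_nat (by omega), show 2 * (k + 1) - 1 = 2 * k + 1 by omega,
      show 2 * (k + 1) = 2 * k + 2 by ring]
    ring
  have hpow : (2 : ℂ) ^ (-(2 * ((k : ℤ) + 1))) = ((2 : ℂ) ^ (2 * k + 2))⁻¹ := by
    rw [show -(2 * ((k : ℤ) + 1)) = -((2 * k + 2 : ℕ) : ℤ) by push_cast; ring, zpow_neg,
      zpow_natCast]
  rw [eulerSeriesTerm, zetaSeriesTerm, eulerPoly_two_mul_add_one_eval_one,
    show 2 * (k + 1) - 1 = 2 * k + 1 by omega, show 2 * (k + 1) = 2 * k + 2 by omega,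
    show 2 * k + 2 + 2 * m + 1 = 2 * k + 2 * m + 3 by omega, hzeta, hpow,
    Nat.factorial_succ (2 * k + 1)]
  have hfact : ((2 * k + 1)! : ℂ) ≠ 0 := Nat.cast_ne_zero.mpr (Nat.factorial_ne_zero _)
  push_cast
  rw [show (2 * k + 1 + 1 : ℂ) = 2 * k + 2 by ring]
  field_simp
  ring

theorem dancs_he_tail_eq_zeta_series_general (m : ℕ) :
    ∃ S T : ℂ,
      HasSum (fun k : ℕ =>
        (((-1 : ℝ) ^ k * π ^ (2 * k) *
          (((eulerPoly (2 * k + 1)).eval 1 : ℚ) : ℝ) / ((2 * k + 2 * m + 3)! : ℝ) : ℝ) : ℂ)) S ∧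
      HasSum (fun n : ℕ =>
        (1 - (2 : ℂ) ^ (-(2 * ((n : ℤ) + 1)))) *
          (((2 * (n + 1) - 1)! : ℕ) : ℂ) / (((2 * (n + 1) + 2 * m + 1)! : ℕ) : ℂ) *
          riemannZeta ((2 * (n + 1) : ℕ) : ℂ)) T ∧
      (π : ℂ) ^ 2 * S = 4 * T := by
  have hT := (summable_zetaSeriesTerm m).hasSum
  have hS : HasSum (fun k => (eulerSeriesTerm m k : ℂ)) (4 / π ^ 2 * ∑' n, zetaSeriesTerm m n) := by
    simpa only [eulerSeriesTerm_eq] using hT.mul_left (4 / (π : ℂ) ^ 2)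
  refine ⟨_, _, hS, hT, ?_⟩
  field_simp

/-- For every positive integer `m`,
`π² ∑_{k=0}^∞ (-1)^k π^{2k} E_{2k+1}(1)/(2k+2m+3)!`
`= 4 ∑_{n=1}^∞ (1 - 2^{-2n}) (2n-1)!/(2n+2m+1)! ζ(2n)`. -/
theorem dancs_he_tail_eq_zeta_series (m : ℕ) (hm : 0 < m) :
    ∃ S T : ℂ,
      HasSum (fun k : ℕ =>
        (((-1 : ℝ) ^ k * π ^ (2 * k) *
          (((eulerPoly (2 * k + 1)).eval 1 : ℚ) : ℝ) / ((2 * k + 2 * m + 3)! : ℝ) : ℝ) : ℂ)) S ∧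
      HasSum (fun n : ℕ =>
        (1 - (2 : ℂ) ^ (-(2 * ((n : ℤ) + 1)))) *
          (((2 * (n + 1) - 1)! : ℕ) : ℂ) / (((2 * (n + 1) + 2 * m + 1)! : ℕ) : ℂ) *
          riemannZeta ((2 * (n + 1) : ℕ) : ℂ)) T ∧
      (π : ℂ) ^ 2 * S = 4 * T :=
  dancs_he_tail_eq_zeta_series_general m
end
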